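/- arXiv:1210.6460 — 6 statements merged into one kernel-verified Lean document; each statement's English description precedes it below -/
import Mathlib

section
/- Let G be a 2-connected bipartite graph and x, y adjacent vertices. If C is a shortest cycle through x and y (which exists and has even length), then the antipodal edge e' of e = xy on C satisfies μ_{x,y}(e') = 1; in particular Σ_{e∈E} μ_{x,y}(e) ≥ 2 = d(x,y) + 1. -/
open Finset

variable {V : Type*} [Fintype V] [DecidableEq V]

/-- Number of vertices strictly closer to `u` than to `v`. -/
noncomputable def nCloser (G : SimpleGraph V) (u v : V) : ℕ :=
  (Finset.univ.filter (fun w => G.dist u w < G.dist v w)).card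

/-- Number of vertices equidistant from `u` and `v`. -/
noncomputable def nEqual (G : SimpleGraph V) (u v : V) : ℕ :=
  (Finset.univ.filter (fun w => G.dist u w = G.dist v w)).card

/-- `n_0(e)` for an edge `e`. -/
noncomputable def nZero (G : SimpleGraph V) : Sym2 V → ℕ :=
  Sym2.lift ⟨fun u v => nEqual G u v, by
    intro u v
    unfold nEqual
    exact congrArg Finset.card (Finset.filter_congr fun w _ => eq_comm)⟩

/-- The contribution `n_u(e) * n_v(e)` of an edge `e`. -/
noncomputable def edgeContribution (G : SimpleGraph V) : Sym2 V → ℕ :=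
  Sym2.lift ⟨fun u v => nCloser G u v * nCloser G v u, fun u v => Nat.mul_comm _ _⟩

/-- The Szeged index `Sz(G) = ∑_{e = uv ∈ E} n_u(e) n_v(e)`. -/
noncomputable def szeged (G : SimpleGraph V) [DecidableRel G.Adj] : ℕ :=
  ∑ e ∈ G.edgeFinset, edgeContribution G e

/-- The revised Szeged index `Sz*(G) = ∑_{e=uv∈E} (n_u(e)+n_0(e)/2)(n_v(e)+n_0(e)/2)`. -/
noncomputable def szegedStar (G : SimpleGraph V) [DecidableRel G.Adj] : ℚ :=
  ∑ e ∈ G.edgeFinset,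
    Sym2.lift ⟨fun u v =>
      ((nCloser G u v : ℚ) + (nEqual G u v : ℚ) / 2) *
        ((nCloser G v u : ℚ) + (nEqual G u v : ℚ) / 2), by
      intro u v
      have h : nEqual G u v = nEqual G v u := by
        unfold nEqual
        exact congrArg Finset.card (Finset.filter_congr fun w _ => eq_comm)
      dsimp only; rw [h]; ring⟩ e

/-- The Wiener index `W(G) = ∑_{{x,y} ⊆ V} d(x,y)`. -/
noncomputable def wiener (G : SimpleGraph V) : ℕ :=
  ∑ p ∈ Finset.univ.sym2, Sym2.lift ⟨fun x y => G.dist x y, fun x y => G.dist_comm⟩ p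

/-- `μ_{x,y}(e)`: the indicator that `x` and `y` are strictly closer to
opposite endpoints of the edge `e`. -/
noncomputable def mu (G : SimpleGraph V) (x y : V) : Sym2 V → ℕ :=
  Sym2.lift ⟨fun u v =>
    if (G.dist x u < G.dist x v ∧ G.dist y v < G.dist y u) ∨
        (G.dist x v < G.dist x u ∧ G.dist y u < G.dist y v) then 1 else 0, by
    intro u v
    dsimp only; exact if_congr or_comm rfl rfl⟩

/-- A graph is 2-connected if it has at least 3 vertices and removing any
single vertex leaves it connected. -/
def TwoConnected (G : SimpleGraph V) : Prop :=
  3 ≤ Fintype.card V ∧ ∀ v : V, (G.induce {u : V | u ≠ v}).Connected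

/-! Let `c = x, y = c₁, c₂, …, c_{2k} = x` be a shortest cycle through `x` and `y`; its length
is even because `G` is bipartite. The tail `P = c₁ ⋯ c_{2k}` is a shortest `y`–`x` walk avoiding
the edge `xy`: closing a shorter one with `xy` would give a shorter cycle through `y`. A shortest
`x`–`v` walk either avoids `xy`, or continues from `y` without `xy` after its last use of it.
Splicing either kind of walk with an arc of `P` yields a `y`–`x` walk avoiding `xy`, so
`d(x, P_i) ≥ min (2k - 1 - i) (i + 1)`, which is `k` at `i = k - 1`, while the arc of `P` gives
`d(x, P_k) ≤ k - 1`. Symmetrically `d(y, P_k) ≥ k > d(y, P_{k-1})`, so `x` and `y` are strictly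
closer to opposite ends of the antipodal edge `c_k c_{k+1} = P_{k-1} P_k`. -/

open SimpleGraph

section

variable {V : Type*} {G : SimpleGraph V}

namespace SimpleGraph.Walk

lemma exists_walk_from_endpoint_avoiding {u v : V} (p : G.Walk u v) {e : Sym2 V}
    (he : e ∈ p.edges) :
    ∃ w ∈ e, ∃ q : G.Walk w v, e ∉ q.edges ∧ q.length < p.length := by
  induction p with
  | nil => simp at he
  | @cons u w' v h q ih =>
    by_cases hq : e ∈ q.edges
    · obtain ⟨w, hw, r, hr, hlen⟩ := ih hq
      exact ⟨w, hw, r, hr, by rw [length_cons]; omega⟩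
    · obtain rfl : e = s(u, w') := by simpa [hq] using he
      exact ⟨w', Sym2.mem_mk_right _ _, q, hq, by simp⟩

def IsShortestAvoiding {u v : V} (p : G.Walk u v) (e : Sym2 V) : Prop :=
  e ∉ p.edges ∧ ∀ q : G.Walk u v, e ∉ q.edges → p.length ≤ q.length

variable {a b : V} {P : G.Walk b a}

lemma IsShortestAvoiding.reverse {e : Sym2 V} (hP : P.IsShortestAvoiding e) :
    P.reverse.IsShortestAvoiding e := by
  refine ⟨by simpa using hP.1, fun q hq => ?_⟩
  simpa using hP.2 q.reverse (by simpa using hq)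

lemma IsShortestAvoiding.min_le_dist_getVert (hP : P.IsShortestAvoiding s(a, b)) (i : ℕ) :
    min (P.length - i) (i + 1) ≤ G.dist a (P.getVert i) := by
  have hdrop : s(a, b) ∉ (P.drop i).edges := fun h =>
    hP.1 (List.mem_of_mem_drop (by rwa [edges_drop] at h))
  have htake : s(a, b) ∉ (P.take i).edges := fun h =>
    hP.1 (List.mem_of_mem_take (by rwa [edges_take] at h))
  obtain ⟨p, hp⟩ := Reachable.exists_walk_length_eq_dist ⟨(P.drop i).reverse⟩
  rw [← hp]
  by_cases hpe : s(a, b) ∈ p.edges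
  · obtain ⟨w, hw, q, hq, hlen⟩ := p.exists_walk_from_endpoint_avoiding hpe
    rcases Sym2.mem_iff.mp hw with rfl | rfl
    · have := hP.2 ((P.take i).append q.reverse) (by simp [edges_append, htake, hq])
      simp only [length_append, length_reverse, take_length] at this
      omega
    · have := hP.2 (q.append (P.drop i)) (by simp [edges_append, hdrop, hq])
      simp only [length_append, drop_length] at this
      omega
  · have := hP.2 ((P.take i).append p.reverse) (by simp [edges_append, htake, hpe])
    simp only [length_append, length_reverse, take_length] at this
    omega

lemma IsShortestAvoiding.dist_antipodal (hP : P.IsShortestAvoiding s(a, b)) {k : ℕ}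
    (hk : P.length + 1 = 2 * k) :
    G.dist a (P.getVert k) < k ∧ k ≤ G.dist a (P.getVert (k - 1)) ∧
      G.dist b (P.getVert (k - 1)) < k ∧ k ≤ G.dist b (P.getVert k) := by
  have hfar_a := hP.min_le_dist_getVert (k - 1)
  have hfar_b := (Sym2.eq_swap ▸ hP.reverse).min_le_dist_getVert (k - 1)
  rw [getVert_reverse, length_reverse, show P.length - (k - 1) = k by omega] at hfar_b
  have hnear_a := dist_le (P.drop k).reverse
  have hnear_b := dist_le (P.take (k - 1))
  simp only [length_reverse, drop_length, take_length] at hnear_a hnear_b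
  omega

lemma IsCycle.isShortestAvoiding_tail [DecidableEq V] {u : V} {c : G.Walk u u} (hc : c.IsCycle)
    (hmin : ∀ c' : G.Walk u u, c'.IsCycle → c.snd ∈ c'.support → c.length ≤ c'.length) :
    c.tail.IsShortestAvoiding s(u, c.snd) := by
  have hadj := c.adj_snd hc.not_nil
  have htail : c.tail.IsPath ∧ s(u, c.snd) ∉ c.tail.edges :=
    (cons_isCycle_iff _ hadj).mp (by rwa [c.cons_tail_eq hc.not_nil])
  refine ⟨htail.2, fun q hq => ?_⟩
  have hcycle : (cons hadj q.bypass).IsCycle :=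
    (cons_isCycle_iff _ hadj).mpr ⟨q.bypass_isPath, fun h => hq (q.edges_bypass_subset_edges h)⟩
  have hle := hmin _ hcycle (by simp)
  rw [length_cons] at hle
  rw [length_tail]
  have := q.length_bypass_le_length
  omega

end SimpleGraph.Walk

lemma mu_eq_one_of_dist_lt {x y u w : V} (hx : G.dist x w < G.dist x u)
    (hy : G.dist y u < G.dist y w) : mu G x y s(u, w) = 1 := by
  rw [mu, Sym2.lift_mk]
  exact if_pos (Or.inr ⟨hx, hy⟩)

lemma mu_eq_one_of_adj {x y : V} (hadj : G.Adj x y) : mu G x y s(y, x) = 1 :=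
  mu_eq_one_of_dist_lt (by simp [dist_eq_one_iff_adj.mpr hadj])
    (by simp [dist_eq_one_iff_adj.mpr hadj.symm])

lemma dist_add_one_le_sum_mu [Fintype V] [DecidableEq V] [DecidableRel G.Adj] {x y : V}
    (hadj : G.Adj x y) {f : Sym2 V} (hf : f ∈ G.edgeSet) (hne : f ≠ s(y, x))
    (hmu : mu G x y f = 1) :
    G.dist x y + 1 ≤ ∑ e ∈ G.edgeFinset, mu G x y e :=
  calc G.dist x y + 1 = mu G x y f + mu G x y s(y, x) := by
        rw [dist_eq_one_iff_adj.mpr hadj, hmu, mu_eq_one_of_adj hadj]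
    _ = ∑ e ∈ {f, s(y, x)}, mu G x y e := (Finset.sum_pair hne).symm
    _ ≤ ∑ e ∈ G.edgeFinset, mu G x y e :=
        Finset.sum_le_sum_of_subset (by simp [Finset.insert_subset_iff, hf, hadj.symm])

end

theorem mu_antipodal_edge_general (G : SimpleGraph V) [DecidableRel G.Adj]
    (hbip : G.Colorable 2) (x y : V)
    (c : G.Walk x x) (hc : c.IsCycle) (hy : c.getVert 1 = y)
    (hmin : ∀ c' : G.Walk x x, c'.IsCycle → y ∈ c'.support → c.length ≤ c'.length) :
    mu G x y s(c.getVert (c.length / 2), c.getVert (c.length / 2 + 1)) = 1 ∧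
    G.dist x y + 1 ≤ ∑ e ∈ G.edgeFinset, mu G x y e := by
  obtain rfl : c.snd = y := hy
  obtain ⟨k, hk⟩ := two_colorable_iff_forall_loop_even.mp hbip x c
  have hk2 : 2 ≤ k := by have := hc.three_le_length; omega
  obtain ⟨hxw, hxu, hyu, hyw⟩ :=
    (hc.isShortestAvoiding_tail hmin).dist_antipodal (k := k) (by rw [Walk.length_tail]; omega)
  simp only [Walk.getVert_tail, Nat.sub_add_cancel (show 1 ≤ k by omega)] at hxw hxu hyu hyw
  rw [show c.length / 2 = k by omega]
  have hantipodal : mu G x c.snd s(c.getVert k, c.getVert (k + 1)) = 1 :=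
    mu_eq_one_of_dist_lt (by omega) (by omega)
  have hadj := c.adj_snd hc.not_nil
  have hne : s(c.getVert k, c.getVert (k + 1)) ≠ s(c.snd, x) := by
    intro h
    rcases Sym2.mem_iff.mp (h ▸ Sym2.mem_mk_left _ _ : c.getVert k ∈ s(c.snd, x)) with hu | hu
    · rw [hu, dist_eq_one_iff_adj.mpr hadj] at hxu
      omega
    · rw [hu, dist_self] at hxu
      omega
  exact ⟨hantipodal, dist_add_one_le_sum_mu hadj (c.adj_getVert_succ (by omega)) hne hantipodal⟩

theorem mu_antipodal_edge (G : SimpleGraph V) [DecidableRel G.Adj]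
    (h2 : TwoConnected G) (hbip : G.Colorable 2) (x y : V) (hadj : G.Adj x y)
    (c : G.Walk x x) (hc : c.IsCycle) (hy : c.getVert 1 = y)
    (hxy : s(x, y) ∈ c.edges)
    (hmin : ∀ c' : G.Walk x x, c'.IsCycle → y ∈ c'.support → c.length ≤ c'.length) :
    mu G x y s(c.getVert (c.length / 2), c.getVert (c.length / 2 + 1)) = 1 ∧
    G.dist x y + 1 ≤ ∑ e ∈ G.edgeFinset, mu G x y e :=
  mu_antipodal_edge_general G hbip x y c hc hy hmin
end

section
/- Let G be a 2-connected bipartite graph. Then for every pair of distinct vertices x, y, Σ_{e∈E} μ_{x,y}(e) ≥ d(x,y) + 1. -/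
open Finset

variable {V : Type*} [Fintype V] [DecidableEq V]

/-! The potential `distDiff G x y w = d(x,w) - d(y,w)` runs from `-d(x,y)` at `x` to `d(x,y)` at
`y`. In a bipartite graph it changes along an edge by `0` or `±2` and is congruent to `d(x,y)`
mod 2, and `μ_{x,y}(uv) = 1` whenever it jumps by 2. Hence every `x`–`y` walk contains, for each
of the `d(x,y)` levels `-d, -d+2, …, d-2`, an edge with `μ = 1` jumping up from that level.
A 2-connected graph has no bridge, so a second `x`–`y` walk avoids the edge found for the lowest
level and supplies one more such edge. -/

section

variable {V : Type*} {G : SimpleGraph V}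

namespace SimpleGraph

lemma Reachable.even_dist_iff {u v : V} (h : G.Reachable u v) (c : G.Coloring Bool) :
    Even (G.dist u v) ↔ (c u ↔ c v) := by
  obtain ⟨p, hp⟩ := h.exists_walk_length_eq_dist
  rw [← hp, c.even_length_iff_congr]

lemma Connected.even_dist_add_dist_add_dist (hG : G.Connected) (c : G.Coloring Bool)
    (u v w : V) : Even (G.dist u v + G.dist v w + G.dist u w) := by
  simp only [Nat.even_add, (hG u v).even_dist_iff c, (hG v w).even_dist_iff c,
    (hG u w).even_dist_iff c]
  cases c u <;> cases c v <;> cases c w <;> decide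

lemma Connected.dist_eq_add_one_or_of_adj (hG : G.Connected) (c : G.Coloring Bool) (u : V)
    {v w : V} (h : G.Adj v w) :
    G.dist u w = G.dist u v + 1 ∨ G.dist u v = G.dist u w + 1 := by
  obtain ⟨r, hr⟩ := hG.even_dist_add_dist_add_dist c u v w
  rw [dist_eq_one_iff_adj.mpr h] at hr
  have := h.diff_dist_adj (u := u)
  omega

lemma Walk.exists_mem_edges_lt_le {β : Type*} [LinearOrder β] (f : V → β) {t : β} :
    ∀ {a b : V} (p : G.Walk a b), f a < t → t ≤ f b →
      ∃ u v, s(u, v) ∈ p.edges ∧ f u < t ∧ t ≤ f v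
  | _, _, .nil, ha, hb => absurd hb (not_le.mpr ha)
  | a, _, .cons (v := c) _ q, ha, hb => by
    by_cases hc : t ≤ f c
    · exact ⟨a, c, by simp, ha, hc⟩
    · obtain ⟨u, v, huv, hu, hv⟩ := q.exists_mem_edges_lt_le f (not_le.mp hc) hb
      exact ⟨u, v, by simp [huv], hu, hv⟩

end SimpleGraph

open SimpleGraph

namespace TwoConnected

variable [Fintype V]

lemma exists_ne_ne (hG : TwoConnected G) (a b : V) : ∃ z, z ≠ a ∧ z ≠ b := by
  classical
  obtain ⟨z, -, hz⟩ := exists_mem_notMem_of_card_lt_card (s := {a, b}) (t := univ)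
    (by have := hG.1; have := card_le_two (a := a) (b := b); rw [card_univ]; omega)
  exact ⟨z, by simp_all⟩

lemma exists_walk_notMem_support (hG : TwoConnected G) {a b w : V} (ha : a ≠ w) (hb : b ≠ w) :
    ∃ p : G.Walk a b, w ∉ p.support := by
  obtain ⟨q⟩ := (hG.2 w).preconnected ⟨a, ha⟩ ⟨b, hb⟩
  refine ⟨q.map (Embedding.induce _).toHom, fun hw => ?_⟩
  have := Walk.support_map (Embedding.induce {u | u ≠ w}).toHom q
  obtain ⟨z, -, hz⟩ := List.mem_map.mp (this ▸ hw)
  exact z.prop hz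

lemma connected (hG : TwoConnected G) : G.Connected := by
  have : Nonempty V := Fintype.card_pos_iff.mp (by have := hG.1; omega)
  refine .mk fun a b => ?_
  obtain ⟨z, hza, hzb⟩ := hG.exists_ne_ne a b
  obtain ⟨p, -⟩ := hG.exists_walk_notMem_support hza.symm hzb.symm
  exact ⟨p⟩

lemma not_isBridge (hG : TwoConnected G) (u v : V) : ¬ G.IsBridge s(u, v) := by
  rw [isBridge_iff_forall_walk_mem_edges, not_forall]
  obtain rfl | huv := eq_or_ne u v
  · exact ⟨.nil, by simp⟩
  obtain ⟨z, hzu, hzv⟩ := hG.exists_ne_ne u v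
  obtain ⟨p, hvp⟩ := hG.exists_walk_notMem_support huv hzv
  cases p with
  | nil => exact absurd rfl hzu
  | cons h q =>
    obtain ⟨r, hur⟩ := hG.exists_walk_notMem_support h.ne.symm huv.symm
    refine ⟨.cons h r, fun hmem => ?_⟩
    rw [Walk.edges_cons, List.mem_cons] at hmem
    rcases hmem with hmem | hmem
    · exact hvp (by simp_all)
    · exact hur (r.fst_mem_support_of_mem_edges hmem)

lemma exists_walk_notMem_edges (hG : TwoConnected G) (e : Sym2 V) (a b : V) :
    ∃ p : G.Walk a b, e ∉ p.edges := by
  induction e using Sym2.ind with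
  | _ u v =>
    exact reachable_deleteEdges_iff_exists_walk.mp
      ((hG.connected.connected_delete_edge_of_not_isBridge (hG.not_isBridge u v)).preconnected a b)

end TwoConnected

noncomputable def distDiff (G : SimpleGraph V) (x y w : V) : ℤ := G.dist x w - G.dist y w

variable {x y : V}

lemma distDiff_left : distDiff G x y x = -G.dist x y := by
  simp [distDiff, dist_comm]

lemma distDiff_right : distDiff G x y y = G.dist x y := by
  simp [distDiff]

lemma mu_mk_eq_one {u v : V} (h : G.Adj u v) (hf : distDiff G x y v = distDiff G x y u + 2) :
    mu G x y s(u, v) = 1 := by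
  have := h.diff_dist_adj (u := x)
  have := h.diff_dist_adj (u := y)
  unfold distDiff at hf
  rw [mu, Sym2.lift_mk]
  exact if_pos (.inl (by omega))

lemma distDiff_adj (hG : G.Connected) (c : G.Coloring Bool) {u v : V} (h : G.Adj u v) :
    distDiff G x y v = distDiff G x y u ∨ distDiff G x y v = distDiff G x y u + 2 ∨
      distDiff G x y u = distDiff G x y v + 2 := by
  have := hG.dist_eq_add_one_or_of_adj c x h
  have := hG.dist_eq_add_one_or_of_adj c y h
  unfold distDiff
  omega

lemma two_dvd_distDiff_add_dist (hG : G.Connected) (c : G.Coloring Bool) (w : V) :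
    2 ∣ distDiff G x y w + G.dist x y := by
  obtain ⟨r, hr⟩ := hG.even_dist_add_dist_add_dist c x w y
  rw [dist_comm (u := w)] at hr
  exact ⟨r - G.dist y w, by unfold distDiff; omega⟩

lemma exists_mem_edges_mu_eq_one (hG : G.Connected) (c : G.Coloring Bool) {a b : V}
    (p : G.Walk a b) {t : ℤ} (ht : 2 ∣ t + G.dist x y) (ha : distDiff G x y a < t)
    (hb : t ≤ distDiff G x y b) :
    ∃ e ∈ p.edges, mu G x y e = 1 ∧ (e.map (distDiff G x y)).inf = t - 2 := by
  obtain ⟨u, v, huv, hu, hv⟩ := p.exists_mem_edges_lt_le (distDiff G x y) ha hb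
  have h := p.adj_of_mem_edges huv
  have hstep : distDiff G x y v = distDiff G x y u + 2 := by
    have := distDiff_adj hG c h (x := x) (y := y)
    omega
  have hu' : distDiff G x y u = t - 2 := by
    have := two_dvd_distDiff_add_dist hG c (x := x) (y := y) u
    omega
  exact ⟨s(u, v), huv, mu_mk_eq_one h hstep, by simp [hu', hstep]⟩

end

theorem sum_mu_ge_dist_add_one (G : SimpleGraph V) [DecidableRel G.Adj]
    (h2 : TwoConnected G) (hbip : G.Colorable 2) (x y : V) (hxy : x ≠ y) :
    G.dist x y + 1 ≤ ∑ e ∈ G.edgeFinset, mu G x y e := by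
  have hG := h2.connected
  have hpos := hG.pos_dist_of_ne hxy
  let c : G.Coloring Bool := G.recolorOfEquiv finTwoEquiv hbip.some
  let S := G.edgeFinset.filter (mu G x y · = 1)
  let level (e : Sym2 V) : ℤ := (e.map (distDiff G x y)).inf
  have crossing (p : G.Walk x y) (k : ℕ) (hk : k < G.dist x y) :
      ∃ e ∈ p.edges, e ∈ S ∧ level e = 2 * k - G.dist x y := by
    obtain ⟨e, hep, he, hlevel⟩ :=
      exists_mem_edges_mu_eq_one hG c p (t := 2 * k + 2 - G.dist x y) ⟨k + 1, by ring⟩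
        (by rw [distDiff_left]; omega) (by rw [distDiff_right]; omega)
    have heS : e ∈ S :=
      mem_filter.mpr ⟨SimpleGraph.mem_edgeFinset.mpr (p.edges_subset_edgeSet hep), he⟩
    exact ⟨e, hep, heS, hlevel.trans (by ring)⟩
  obtain ⟨p⟩ := hG.preconnected x y
  have hlevels : G.dist x y ≤ #(S.image level) := by
    refine (card_range _).symm.trans_le <| card_le_card_of_injOn
      (fun k : ℕ => 2 * (k : ℤ) - G.dist x y) (fun k hk => ?_) (fun k _ l _ hkl => by simp_all)
    obtain ⟨e, -, he, hlevel⟩ := crossing p k (by simpa using hk)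
    exact mem_image.mpr ⟨e, he, hlevel⟩
  obtain ⟨e₁, -, he₁, hlevel₁⟩ := crossing p 0 hpos
  obtain ⟨q, hq⟩ := h2.exists_walk_notMem_edges e₁ x y
  obtain ⟨e₂, he₂q, he₂, hlevel₂⟩ := crossing q 0 hpos
  have hlt : #(S.image level) < #S := card_image_le.lt_of_ne fun h =>
    hq (card_image_iff.mp h he₂ he₁ (hlevel₂.trans hlevel₁.symm) ▸ he₂q)
  calc G.dist x y + 1 ≤ #S := by omega
    _ = ∑ e ∈ S, mu G x y e := by
      rw [card_eq_sum_ones]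
      exact sum_congr rfl fun e he => (mem_filter.mp he).2.symm
    _ ≤ ∑ e ∈ G.edgeFinset, mu G x y e := sum_le_sum_of_subset (filter_subset _ _)
end

section
/- Let G be a bipartite graph containing a cycle, and let C = v_1 v_2 ⋯ v_p v_1 be a shortest cycle in G (so p is even, p ≥ 4). Then for each i with 1 ≤ i ≤ p/2 and every edge e of C, μ_{v_i, v_{p/2+i}}(e) = 1; consequently Σ_{e∈E} μ_{v_i, v_{p/2+i}}(e) − d(v_i, v_{p/2+i}) ≥ p/2. -/
open Finset

variable {V : Type*} [Fintype V] [DecidableEq V]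

/-! In a bipartite graph adjacent vertices lie at distances of different parity from any
vertex of their component. Let `c` be a shortest cycle, of length `2n`, and `x = cᵢ`,
`y = cᵢ₊ₙ`. Then `d(x, y) = n`: a shorter `x`–`y` path and the arc of `c` of length `n` are
two distinct paths, so together they contain a cycle of length `< 2n`. Walking around `c` in
both directions shows `d(x, w) + d(w, y) ≤ n` for every vertex `w` of `c`, so every such `w`
lies on an `x`–`y` geodesic. Across an edge `ab` of `c` the distance to `x` therefore changes
by one and the distance to `y` by one in the opposite direction, i.e. `μ_{x,y}(ab) = 1`; the
`2n` edges of `c` then give `∑ μ ≥ 2n ≥ d(x, y) + n`. -/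

namespace SimpleGraph

variable {α : Type*} {G : SimpleGraph α} {u v x a b : α}

namespace Walk

lemma reachable_getVert_getVert (w : G.Walk u v) (i j : ℕ) :
    G.Reachable (w.getVert i) (w.getVert j) :=
  (w.take i).reachable.symm.trans (w.take j).reachable

lemma exists_eq_mk_getVert_of_mem_edges (w : G.Walk u v) {e : Sym2 α} (he : e ∈ w.edges) :
    ∃ j < w.length, e = s(w.getVert j, w.getVert (j + 1)) := by
  obtain ⟨j, hj, rfl⟩ := List.mem_iff_getElem.mp he
  exact ⟨j, w.length_edges ▸ hj, getElem_edges hj⟩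

lemma dist_getVert_le (w : G.Walk u v) {i j : ℕ} (hij : i ≤ j) :
    G.dist (w.getVert i) (w.getVert j) ≤ j - i := by
  have hend : (w.drop i).getVert (j - i) = w.getVert j := by
    rw [drop_getVert, Nat.add_sub_cancel' hij]
  have h := dist_le ((w.drop i).take (j - i))
  simp only [hend, take_length, drop_length] at h
  exact h.trans (min_le_left _ _)

lemma dist_getVert_le_of_closed (c : G.Walk u u) {i j : ℕ} (hij : i ≤ j) (hj : j ≤ c.length) :
    G.dist (c.getVert j) (c.getVert i) ≤ c.length - j + i := by
  simpa [hij.trans hj] using dist_le ((c.drop j).append (c.take i))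

lemma dist_getVert_add_dist_getVert_le (c : G.Walk u u) {n i j : ℕ} (hL : c.length = 2 * n)
    (hi : i ≤ n) (hj : j ≤ c.length) :
    G.dist (c.getVert i) (c.getVert j) + G.dist (c.getVert j) (c.getVert (i + n)) ≤ n := by
  by_cases hij : i ≤ j
  · by_cases hjn : j ≤ i + n
    · have h₁ := c.dist_getVert_le hij
      have h₂ := c.dist_getVert_le hjn
      omega
    · have h₁ := c.dist_getVert_le_of_closed hij hj
      have h₂ := c.dist_getVert_le (le_of_not_ge hjn)
      rw [dist_comm] at h₁ h₂
      omega
  · have h₁ := c.dist_getVert_le (le_of_not_ge hij)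
    have h₂ := c.dist_getVert_le_of_closed (by omega : j ≤ i + n) (by omega)
    rw [dist_comm] at h₁ h₂
    omega

lemma IsTrail.length_le_sum_edgeFinset [Fintype α] [DecidableEq α] [DecidableRel G.Adj]
    {t : G.Walk u v} (ht : t.IsTrail) {f : Sym2 α → ℕ}
    (hf : ∀ e ∈ t.edges, 1 ≤ f e) : t.length ≤ ∑ e ∈ G.edgeFinset, f e :=
  calc t.length = #t.edges.toFinset := by
        rw [List.toFinset_card_of_nodup ht.edges_nodup, length_edges]
    _ = ∑ e ∈ t.edges.toFinset, 1 := card_eq_sum_ones _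
    _ ≤ ∑ e ∈ t.edges.toFinset, f e := sum_le_sum fun e he => hf e (List.mem_toFinset.mp he)
    _ ≤ ∑ e ∈ G.edgeFinset, f e := sum_le_sum_of_subset fun e he =>
        mem_edgeFinset.mpr (t.edges_subset_edgeSet (List.mem_toFinset.mp he))

lemma IsPath.exists_isCycle_length_le_of_ne {p q : G.Walk u v} (hp : p.IsPath)
    (hq : q.IsPath) (hpq : p ≠ q) :
    ∃ (w : α) (c : G.Walk w w), c.IsCycle ∧ c.length ≤ p.length + q.length := by
  obtain ⟨_, _, p', q', hp', hq', hc⟩ := hp.exists_isCycle_of_ne hq hpq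
  refine ⟨_, _, hc, ?_⟩
  have := hp'.edges_isInfix.length_le
  have := hq'.edges_isInfix.length_le
  simp only [length_append, length_reverse, length_edges] at *
  omega

lemma IsCycle.isPath_drop_take {c : G.Walk u u} (hc : c.IsCycle) (i : ℕ) {k : ℕ}
    (hk : k < c.length) : ((c.drop i).take k).IsPath := by
  rw [isPath_def, support_take, drop_support_eq_support_drop_min]
  rcases Nat.eq_zero_or_pos i with rfl | hi
  · simpa [isPath_def, support_take] using hc.isPath_take hk
  · simpa [isPath_def, support_take] using (hc.isPath_drop hi).take k

lemma IsCycle.dist_getVert_eq_of_two_mul_le {c : G.Walk u u} (hc : c.IsCycle)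
    (hmin : ∀ (w : α) (c' : G.Walk w w), c'.IsCycle → c.length ≤ c'.length) {i k : ℕ}
    (hik : i + k ≤ c.length) (hk : 2 * k ≤ c.length) :
    G.dist (c.getVert i) (c.getVert (i + k)) = k := by
  have hend : (c.drop i).getVert k = c.getVert (i + k) := drop_getVert c i k
  set arc : G.Walk (c.getVert i) (c.getVert (i + k)) := ((c.drop i).take k).copy rfl hend
  have harc_len : arc.length = k := by simp [arc]; omega
  have harc_path : arc.IsPath := by
    have := hc.three_le_length
    simpa [arc] using hc.isPath_drop_take i (by omega : k < c.length)
  refine le_antisymm ((dist_le arc).trans harc_len.le) (not_lt.mp fun hlt => ?_)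
  obtain ⟨p, hp, hp_len⟩ := arc.reachable.exists_path_of_dist
  have hne : p ≠ arc := fun h => by rw [h] at hp_len; omega
  obtain ⟨w, c', hc', hlen⟩ := hp.exists_isCycle_length_le_of_ne harc_path hne
  have := hmin w c' hc'
  omega

lemma IsCycle.dist_getVert_add_dist_getVert_eq {c : G.Walk u u} (hc : c.IsCycle)
    (hmin : ∀ (w : α) (c' : G.Walk w w), c'.IsCycle → c.length ≤ c'.length) {n i j : ℕ}
    (hL : c.length = 2 * n) (hi : i ≤ n) (hj : j ≤ c.length) :
    G.dist (c.getVert i) (c.getVert j) + G.dist (c.getVert j) (c.getVert (i + n)) = n := by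
  refine le_antisymm (c.dist_getVert_add_dist_getVert_le hL hi hj) ?_
  calc n = G.dist (c.getVert i) (c.getVert (i + n)) :=
        (hc.dist_getVert_eq_of_two_mul_le hmin (by omega) (by omega)).symm
    _ ≤ _ := (c.reachable_getVert_getVert i j).dist_triangle_left _

end Walk

lemma Colorable.dist_ne_dist_of_adj (hG : G.Colorable 2) (hxa : G.Reachable x a)
    (hab : G.Adj a b) : G.dist x a ≠ G.dist x b := by
  obtain ⟨C⟩ := hG
  set C' : G.Coloring Bool := G.recolorOfEquiv finTwoEquiv C
  obtain ⟨p, hp⟩ := hxa.exists_walk_length_eq_dist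
  obtain ⟨q, hq⟩ := (hxa.trans hab.reachable).exists_walk_length_eq_dist
  have hpa := C'.even_length_iff_congr p
  have hqb := C'.even_length_iff_congr q
  have hab' := C'.valid hab
  intro h
  rw [hp, h, ← hq, hqb] at hpa
  exact hab' (Bool.eq_iff_iff.mpr (by tauto))

lemma Colorable.even_length (hG : G.Colorable 2) (c : G.Walk u u) : Even c.length := by
  obtain ⟨C⟩ := hG
  exact ((G.recolorOfEquiv finTwoEquiv C).even_length_iff_congr c).mpr Iff.rfl

end SimpleGraph

lemma mu_mk_eq_one_of_dist_add_dist_eq {α : Type*} {G : SimpleGraph α} {x y a b : α}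
    (h : G.dist x a + G.dist a y = G.dist x b + G.dist b y) (hne : G.dist x a ≠ G.dist x b) :
    mu G x y s(a, b) = 1 := by
  rw [SimpleGraph.dist_comm (u := a), SimpleGraph.dist_comm (u := b)] at h
  simp only [mu, Sym2.lift_mk]
  rw [if_pos]
  omega

theorem mu_on_shortest_cycle_general (G : SimpleGraph V) [DecidableRel G.Adj]
    (hbip : G.Colorable 2) (u : V)
    (c : G.Walk u u) (hc : c.IsCycle)
    (hmin : ∀ (w : V) (c' : G.Walk w w), c'.IsCycle → c.length ≤ c'.length) :
    ∀ i < c.length / 2,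
      (∀ e ∈ c.edges, mu G (c.getVert i) (c.getVert (c.length / 2 + i)) e = 1) ∧
      G.dist (c.getVert i) (c.getVert (c.length / 2 + i)) + c.length / 2 ≤
        ∑ e ∈ G.edgeFinset, mu G (c.getVert i) (c.getVert (c.length / 2 + i)) e := by
  intro i hi
  set n := c.length / 2
  have hL : c.length = 2 * n := by
    obtain ⟨m, hm⟩ := hbip.even_length c
    omega
  have hgeodesic : ∀ j ≤ c.length,
      G.dist (c.getVert i) (c.getVert j) + G.dist (c.getVert j) (c.getVert (n + i)) = n := by
    intro j hj
    rw [add_comm n i]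
    exact hc.dist_getVert_add_dist_getVert_eq hmin hL hi.le hj
  have hone : ∀ e ∈ c.edges, mu G (c.getVert i) (c.getVert (n + i)) e = 1 := by
    intro e he
    obtain ⟨j, hj, rfl⟩ := c.exists_eq_mk_getVert_of_mem_edges he
    exact mu_mk_eq_one_of_dist_add_dist_eq (by rw [hgeodesic j hj.le, hgeodesic (j + 1) hj])
      (hbip.dist_ne_dist_of_adj (c.reachable_getVert_getVert i j) (c.adj_getVert_succ hj))
  refine ⟨hone, ?_⟩
  have hdist := c.dist_getVert_le (by omega : i ≤ n + i)
  have hsum := hc.isTrail.length_le_sum_edgeFinset fun e he => (hone e he).ge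
  omega

theorem mu_on_shortest_cycle (G : SimpleGraph V) [DecidableRel G.Adj]
    (hconn : G.Connected) (hbip : G.Colorable 2) (u : V)
    (c : G.Walk u u) (hc : c.IsCycle)
    (hmin : ∀ (w : V) (c' : G.Walk w w), c'.IsCycle → c.length ≤ c'.length) :
    ∀ i < c.length / 2,
      (∀ e ∈ c.edges, mu G (c.getVert i) (c.getVert (c.length / 2 + i)) e = 1) ∧
      G.dist (c.getVert i) (c.getVert (c.length / 2 + i)) + c.length / 2 ≤
        ∑ e ∈ G.edgeFinset, mu G (c.getVert i) (c.getVert (c.length / 2 + i)) e :=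
  mu_on_shortest_cycle_general G hbip u c hc hmin
end

section
/- Let G be a connected graph, let x, y be vertices in different blocks, and suppose every path from x to y passes through a cut vertex w. Then for any edge e not on any shortest x–y path, if μ_{x,w}(e) = 1 and e lies in the block-component of x (so every path from the endpoints of e to y goes through w), then μ_{x,y}(e) = 1. -/
open Finset

variable {V : Type*} [Fintype V] [DecidableEq V]

/-! Since `w` lies on every path from either endpoint `z` of `e` to `y`, a shortest `z`–`y` path
passes through `w`, so `d(z, y) = d(z, w) + d(w, y)`. Thus `d(y, ·)` and `d(w, ·)` differ on the
endpoints of `e` by the same constant, and `μ_{x,y}(e) = μ_{x,w}(e)`. -/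

namespace SimpleGraph

omit [Fintype V] in
theorem Connected.dist_add_dist_of_forall_isPath_mem_support {G : SimpleGraph V}
    (hconn : G.Connected) {z y w : V} (h : ∀ p : G.Walk z y, p.IsPath → w ∈ p.support) :
    G.dist z w + G.dist w y = G.dist z y := by
  obtain ⟨p, hpath, hp⟩ := hconn.exists_path_of_dist z y
  have hw : w ∈ p.support := h p hpath
  refine le_antisymm ?_ hconn.dist_triangle
  calc G.dist z w + G.dist w y
      ≤ (p.takeUntil w hw).length + (p.dropUntil w hw).length :=
        add_le_add (dist_le _) (dist_le _)
    _ = G.dist z y := by rw [← Walk.length_append, Walk.take_spec, hp]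

end SimpleGraph

omit [Fintype V] [DecidableEq V] in
theorem mu_eq_of_forall_dist_eq_add {G : SimpleGraph V} {x y w : V} {e : Sym2 V} {k : ℕ}
    (h : ∀ z ∈ e, G.dist z y = G.dist z w + k) : mu G x y e = mu G x w e := by
  induction e using Sym2.ind with
  | _ u v =>
    have hu := h u (Sym2.mem_mk_left u v)
    have hv := h v (Sym2.mem_mk_right u v)
    simp only [mu, Sym2.lift_mk, G.dist_comm (u := y), G.dist_comm (u := w), hu, hv,
      Nat.add_lt_add_iff_right]

theorem mu_through_cut_vertex_general (G : SimpleGraph V) (hconn : G.Connected)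
    (x y w : V) (e : Sym2 V)
    (hside : ∀ z ∈ e, ∀ p : G.Walk z y, p.IsPath → w ∈ p.support)
    (hmu : mu G x w e = 1) : mu G x y e = 1 := by
  have hdist : ∀ z ∈ e, G.dist z y = G.dist z w + G.dist w y := fun z hz =>
    (hconn.dist_add_dist_of_forall_isPath_mem_support (hside z hz)).symm
  rwa [mu_eq_of_forall_dist_eq_add hdist]

theorem mu_through_cut_vertex (G : SimpleGraph V) (hconn : G.Connected)
    (x y w : V) (e : Sym2 V) (he : e ∈ G.edgeSet)
    (hsep : ∀ p : G.Walk x y, p.IsPath → w ∈ p.support)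
    (hnotshort : ∀ p : G.Walk x y, p.IsPath → p.length = G.dist x y → e ∉ p.edges)
    (hside : ∀ z ∈ e, ∀ p : G.Walk z y, p.IsPath → w ∈ p.support)
    (hmu : mu G x w e = 1) : mu G x y e = 1 :=
  mu_through_cut_vertex_general G hconn x y w e hside hmu
end

section
/- If G is bipartite with an even cycle C of length p being a shortest cycle, then C is isometric in G: for any two vertices u, v on C, d_G(u,v) equals the distance between u and v along C. -/
open Finset

variable {V : Type*} [Fintype V] [DecidableEq V]

/-!
If `d_G(x, y)` were smaller than the distance along `c`, a shortest `x`–`y` path `P` would be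
shorter than both arcs of `c` between `x` and `y`. `P` and (a path inside) one arc are then distinct
paths, so together they contain a cycle of length at most `|P| + |arc| < |c|`, contradicting the
minimality of `c`.
-/

namespace SimpleGraph

-- Rebinding `V` keeps the ambient `[Fintype V] [DecidableEq V]` out of these lemmas.
variable {V : Type*} {G : SimpleGraph V} {x y : V}

lemma Walk.edges_subset_edgeSet_fromEdgeSet {s : Set (Sym2 V)} (W : G.Walk x y)
    (hW : ∀ e ∈ W.edges, e ∈ s) : ∀ e ∈ W.edges, e ∈ (fromEdgeSet s).edgeSet := by
  intro e he
  rw [edgeSet_fromEdgeSet]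
  exact ⟨hW e he, G.not_isDiag_of_mem_edgeSet (W.edges_subset_edgeSet he)⟩

lemma Walk.exists_walks_length_add_eq [DecidableEq V] {u : V} (c : G.Walk u u)
    (hx : x ∈ c.support) (hy : y ∈ c.support) :
    ∃ A B : G.Walk x y,
      A.length + B.length = c.length ∧ A.edges ⊆ c.edges ∧ B.edges ⊆ c.edges := by
  set r := c.rotate x hx
  have hyr : y ∈ r.support := (c.mem_support_rotate_iff x hx).mpr hy
  have hrc : r.edges ⊆ c.edges := (c.rotate_edges x hx).perm.subset
  refine ⟨r.takeUntil y hyr, (r.dropUntil y hyr).reverse, ?_, ?_, ?_⟩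
  · rw [length_reverse, ← length_append, take_spec, length_rotate]
  · exact List.Subset.trans (r.edges_takeUntil_subset_edges hyr) hrc
  · rw [edges_reverse, List.reverse_subset]
    exact List.Subset.trans (r.edges_dropUntil_subset_edges hyr) hrc

end SimpleGraph

open SimpleGraph Walk in
theorem shortest_cycle_isometric_general (G : SimpleGraph V) (u : V)
    (c : G.Walk u u)
    (hmin : ∀ (w : V) (c' : G.Walk w w), c'.IsCycle → c.length ≤ c'.length) :
    ∀ x ∈ c.support, ∀ y ∈ c.support,
      G.dist x y = (SimpleGraph.fromEdgeSet {e | e ∈ c.edges}).dist x y := by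
  intro x hx y hy
  set H := fromEdgeSet {e | e ∈ c.edges}
  obtain ⟨A, B, hlen, hAc, hBc⟩ := c.exists_walks_length_add_eq hx hy
  have hAH := A.bypass.edges_subset_edgeSet_fromEdgeSet fun e he =>
    hAc (A.edges_bypass_subset_edges he)
  have hBH := B.edges_subset_edgeSet_fromEdgeSet fun e he => hBc he
  have hA : H.dist x y ≤ A.bypass.length := by simpa using dist_le (A.bypass.transfer H hAH)
  have hB : H.dist x y ≤ B.length := by simpa using dist_le (B.transfer H hBH)
  have hHG : H ≤ G := fun a b hab => c.adj_of_mem_edges hab.1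
  refine le_antisymm (Reachable.dist_anti hHG ⟨B.transfer H hBH⟩) (not_lt.mp fun hlt => ?_)
  obtain ⟨P, hP, hPlen⟩ := A.reachable.exists_path_of_dist
  obtain ⟨w, -, -, C, hC, hClen⟩ :=
    hP.exists_isCycle_length_le_add_of_ne A.bypass_isPath (by rintro rfl; omega)
  have hcC := hmin w C hC
  have hbypass := A.length_bypass_le_length
  omega

theorem shortest_cycle_isometric (G : SimpleGraph V)
    (hbip : G.Colorable 2) (p : ℕ) (hpe : Even p) (u : V)
    (c : G.Walk u u) (hc : c.IsCycle) (hp : c.length = p)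
    (hmin : ∀ (w : V) (c' : G.Walk w w), c'.IsCycle → c.length ≤ c'.length) :
    ∀ x ∈ c.support, ∀ y ∈ c.support,
      G.dist x y = (SimpleGraph.fromEdgeSet {e | e ∈ c.edges}).dist x y :=
  shortest_cycle_isometric_general G u c hmin
end

section
/- For a 2-connected bipartite graph G and any vertex w, there exists a vertex z and a shortest path P from z to w such that there are at least two edges e', e'' ∉ E(P) with μ_{z,w}(e') = μ_{z,w}(e'') = 1; specifically one can take z antipodal to w on a shortest cycle through w. -/
open Finset

variable {V : Type*} [Fintype V] [DecidableEq V]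

/-!
Take `z` at maximal distance `D` from `w`, a shortest path `p = z x ⋯ w`, and a second
neighbour `y ≠ x` of `z` (2-connectivity). Bipartiteness forbids `d(w, y) = D` and maximality
forbids `D + 1`, so `d(w, y) = D - 1`. Then `y` is not on `p`, since on the shortest path
`x ⋯ w` only `x` has distance `D - 1` from `w`. For a neighbour `y'` of `y` with
`d(w, y') = D - 2`, the edges `zy` and `yy'` are both separated by `μ_{z,w}` and miss `p`.
-/

namespace SimpleGraph

variable {W : Type*} {G : SimpleGraph W} {u v w : W}

lemma Walk.dist_add_dist_le_length (p : G.Walk u w) (hv : v ∈ p.support) :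
    G.dist u v + G.dist v w ≤ p.length := by
  classical
  rw [← p.take_spec hv, Walk.length_append]
  exact add_le_add (dist_le _) (dist_le _)

lemma Walk.eq_of_mem_support_of_length_le_dist (p : G.Walk u w) (hv : v ∈ p.support)
    (hp : p.length ≤ G.dist v w) : v = u := by
  classical
  have := p.dist_add_dist_le_length hv
  exact ((p.takeUntil v hv).reachable.dist_eq_zero_iff.mp (by omega)).symm

lemma Reachable.exists_adj_dist_add_one (h : G.Reachable u w) (hne : u ≠ w) :
    ∃ u', G.Adj u u' ∧ G.dist u' w + 1 = G.dist u w := by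
  obtain ⟨p, -, hp⟩ := h.exists_path_of_dist
  cases p with
  | nil => exact absurd rfl hne
  | cons hadj q =>
    refine ⟨_, hadj, le_antisymm ?_ ?_⟩
    · rw [← hp, Walk.length_cons]
      exact Nat.add_le_add_right (dist_le q) 1
    · have := hadj.reachable.dist_triangle_left w
      rw [dist_eq_one_iff_adj.mpr hadj] at this
      omega

lemma Colorable.dist_ne_dist_of_adj_s18 (hG : G.Colorable 2) (hr : G.Reachable u v)
    (hadj : G.Adj v w) : G.dist u v ≠ G.dist u w := by
  obtain ⟨c⟩ := hG
  let c' : G.Coloring Bool := G.recolorOfEquiv finTwoEquiv c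
  obtain ⟨p, -, hp⟩ := hr.exists_path_of_dist
  obtain ⟨q, -, hq⟩ := (hr.trans hadj.reachable).exists_path_of_dist
  intro h
  have hpv := c'.even_length_iff_congr p
  have hqw := c'.even_length_iff_congr q
  rw [hp, h, ← hq, hqw] at hpv
  exact c'.valid hadj (Bool.eq_iff_iff.mpr (by tauto))

lemma Colorable.dist_add_one_eq_of_forall_dist_le (hG : G.Colorable 2) (hconn : G.Connected)
    (hmax : ∀ v, G.dist w v ≤ G.dist w u) (hadj : G.Adj u v) : G.dist w v + 1 = G.dist w u := by
  have hne := hG.dist_ne_dist_of_adj_s18 (hconn w u) hadj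
  have hle := hmax v
  have hstep := hadj.diff_dist_adj (u := w)
  omega

end SimpleGraph

open SimpleGraph

section TwoConnected

variable {W : Type*} [Fintype W] {G : SimpleGraph W}

lemma TwoConnected.exists_ne_ne_s18 (h : TwoConnected G) (a b : W) : ∃ c, c ≠ a ∧ c ≠ b :=
  ENat.exists_ne_ne_of_three_le (by simpa using h.1) a b

lemma TwoConnected.connected_s18 (h : TwoConnected G) : G.Connected := by
  have : Nonempty W := Fintype.card_pos_iff.mp (by have := h.1; omega)
  refine (connected_iff G).mpr ⟨fun a b => ?_, ‹_›⟩
  obtain ⟨c, hca, hcb⟩ := h.exists_ne_ne_s18 a b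
  simpa using ((h.2 c) ⟨a, hca.symm⟩ ⟨b, hcb.symm⟩).map (Embedding.induce _).toHom

lemma TwoConnected.exists_adj_ne (h : TwoConnected G) {z x : W} (hzx : G.Adj z x) :
    ∃ y, G.Adj z y ∧ y ≠ x := by
  obtain ⟨c, hcz, hcx⟩ := h.exists_ne_ne_s18 z x
  have : Nontrivial {u : W | u ≠ x} :=
    nontrivial_of_ne ⟨z, hzx.ne⟩ ⟨c, hcx⟩ (by simpa using hcz.symm)
  obtain ⟨⟨y, hyx⟩, hy⟩ := (h.2 x).preconnected.exists_adj_of_nontrivial ⟨z, hzx.ne⟩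
  exact ⟨y, hy, hyx⟩

end TwoConnected

lemma mu_mk_eq_one_s18 {W : Type*} {G : SimpleGraph W} {x y a b : W} (hx : G.dist x a < G.dist x b)
    (hy : G.dist y b < G.dist y a) : mu G x y s(a, b) = 1 :=
  if_pos (Or.inl ⟨hx, hy⟩)

theorem exists_two_mu_edges_off_shortest_path_of_forall_dist_le {W : Type*} [Fintype W]
    {G : SimpleGraph W} [DecidableRel G.Adj] (hconn : G.Connected) (hbip : G.Colorable 2)
    {w z : W} (hmax : ∀ v, G.dist w v ≤ G.dist w z) (hzw : z ≠ w)
    (hdeg : ∀ x, G.Adj z x → ∃ y, G.Adj z y ∧ y ≠ x) :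
    ∃ p : G.Walk z w, p.IsPath ∧ p.length = G.dist z w ∧
      ∃ e' e'' : Sym2 W, e' ≠ e'' ∧ e' ∈ G.edgeFinset ∧ e'' ∈ G.edgeFinset ∧
        e' ∉ p.edges ∧ e'' ∉ p.edges ∧ mu G z w e' = 1 ∧ mu G z w e'' = 1 := by
  obtain ⟨p, hp, hpl⟩ := hconn.exists_path_of_dist z w
  obtain ⟨x, hzx, p', rfl⟩ := Walk.exists_eq_cons_of_ne hzw p
  obtain ⟨y, hzy, hyx⟩ := hdeg x hzx
  have hwy : G.dist w y + 1 = G.dist w z := hbip.dist_add_one_eq_of_forall_dist_le hconn hmax hzy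
  have hy : y ∉ (Walk.cons hzx p').support := by
    rw [Walk.support_cons, List.mem_cons, not_or]
    refine ⟨hzy.ne', fun hy => hyx (p'.eq_of_mem_support_of_length_le_dist hy ?_)⟩
    rw [Walk.length_cons, dist_comm] at hpl
    rw [dist_comm]
    omega
  obtain ⟨y', hyy', hwy'⟩ := (hconn y w).exists_adj_dist_add_one
    (ne_of_mem_of_not_mem (Walk.end_mem_support _) hy).symm
  rw [dist_comm, dist_comm (u := y)] at hwy'
  have hzy' : G.dist w z ≤ G.dist w y' + G.dist z y' := by
    rw [dist_comm (u := z)]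
    exact hconn.dist_triangle
  have hdzy : G.dist z y = 1 := dist_eq_one_iff_adj.mpr hzy
  refine ⟨_, hp, hpl, s(z, y), s(y, y'), ?_, mem_edgeFinset.mpr hzy, mem_edgeFinset.mpr hyy',
    fun he => hy (Walk.snd_mem_support_of_mem_edges _ he),
    fun he => hy (Walk.fst_mem_support_of_mem_edges _ he),
    mu_mk_eq_one_s18 (by rw [dist_self]; omega) (by omega), mu_mk_eq_one_s18 (by omega) (by omega)⟩
  intro h
  rcases Sym2.eq_iff.mp h with ⟨rfl, -⟩ | ⟨rfl, -⟩
  · exact hzy.ne rfl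
  · omega

theorem exists_two_mu_edges_off_shortest_path (G : SimpleGraph V) [DecidableRel G.Adj]
    (h2 : TwoConnected G) (hbip : G.Colorable 2) (w : V) :
    ∃ (z : V) (p : G.Walk z w), p.IsPath ∧ p.length = G.dist z w ∧
      ∃ e' e'' : Sym2 V, e' ≠ e'' ∧ e' ∈ G.edgeFinset ∧ e'' ∈ G.edgeFinset ∧
        e' ∉ p.edges ∧ e'' ∉ p.edges ∧ mu G z w e' = 1 ∧ mu G z w e'' = 1 := by
  have hconn := h2.connected_s18
  have := hconn.nonempty
  obtain ⟨z, -, hmax⟩ := Finset.univ.exists_max_image (G.dist w) Finset.univ_nonempty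
  obtain ⟨v, hvw, -⟩ := h2.exists_ne_ne_s18 w w
  have hzw : z ≠ w := by
    rintro rfl
    exact hvw (hconn.dist_eq_zero_iff.mp (by simpa using hmax v (Finset.mem_univ v))).symm
  exact ⟨z, exists_two_mu_edges_off_shortest_path_of_forall_dist_le hconn hbip
    (fun v => hmax v (Finset.mem_univ v)) hzw fun _ => h2.exists_adj_ne⟩
end
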